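/- Let A[1..i] and B[1..m] be sequences with A[i] = B[j] and r ≥ 2. With Q' defined as the minimum possible largest element over δ-almost increasing common subsequences of a given length ending at a given position of B (∞ if none exist), the following holds: Q'(i, j, r) = min over all k with 1 ≤ k < j such that a length-(r−1) subsequence ending at k exists and A[i] + δ > Q'(i−1, k, r−1), of max(A[i], Q'(i−1, k, r−1)). -/

import Mathlib

/-!
Dropping the matched last entry `A[i] = B[j]` from a witness for `Q'(i, j, r)` leaves a witness
for `Q'(i - 1, k, r - 1)` for some `k < j`, all of whose entries lie below `A[i] + δ` (the
δ-condition against the dropped entry); conversely every such witness extends by `A[i]`. The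
largest entry of the extended witness is the larger of `A[i]` and that of the shorter one, and
since witnesses are finite, the strict bound `A[i] + δ` on one of them passes to the infimum
`Q'(i - 1, k, r - 1)`.
-/

open List

def DeltaAlmostIncreasing (δ : ℝ) (l : List ℝ) : Prop :=
  l.Pairwise fun a b => b + δ > a

def ExistsDAICSEndingAt (δ : ℝ) (X B : List ℝ) (j r : ℕ) : Prop :=
  ∃ S₀ : List ℝ, (S₀ ++ [B[j-1]!]).length = r ∧
    DeltaAlmostIncreasing δ (S₀ ++ [B[j-1]!]) ∧
    (S₀ ++ [B[j-1]!]) <+ X ∧ S₀ <+ B.take (j-1)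

/-- Q'(i,k,r) as in Lemma 1; ⊤ (∞) if no such subsequence exists. -/
noncomputable def Qp (δ : ℝ) (A B : List ℝ) (i k r : ℕ) : EReal :=
  sInf {w : EReal | ∃ S₀ : List ℝ, (S₀ ++ [B[k-1]!]).length = r ∧
    DeltaAlmostIncreasing δ (S₀ ++ [B[k-1]!]) ∧
    (S₀ ++ [B[k-1]!]) <+ A.take i ∧ S₀ <+ B.take (k-1) ∧
    ∀ x ∈ S₀ ++ [B[k-1]!], (x : EReal) ≤ w}

theorem List.append_singleton_sublist_iff {α : Type*} {T L : List α} {x : α} :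
    T ++ [x] <+ L ↔ ∃ n, ∃ h : n < L.length, L[n] = x ∧ T <+ L.take n := by
  constructor
  · intro h
    obtain ⟨r₁, r₂, rfl, hT, hx⟩ := append_sublist_iff.1 h
    obtain ⟨u, v, rfl⟩ := append_of_mem (hx.subset (mem_singleton_self x))
    refine ⟨(r₁ ++ u).length, by simp, ?_, ?_⟩
    · simp [← append_assoc]
    · rw [← append_assoc, take_left]
      exact hT.trans (sublist_append_left _ _)
  · rintro ⟨n, hn, rfl, hT⟩
    have hsnoc : T ++ [L[n]] <+ L.take (n + 1) := by
      rw [← take_concat_get' L n hn]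
      exact (append_sublist_append_right _).2 hT
    exact hsnoc.trans (take_sublist _ _)

theorem List.sublist_take_iff_of_ne_nil {α : Type*} [Inhabited α] {B S : List α} {m : ℕ}
    (hS : S ≠ []) :
    S <+ B.take m ↔ ∃ k, 1 ≤ k ∧ k ≤ m ∧ k ≤ B.length ∧
      ∃ T, S = T ++ [B[k-1]!] ∧ T <+ B.take (k-1) := by
  obtain ⟨T, x, rfl⟩ := (eq_nil_or_concat' S).resolve_left hS
  rw [append_singleton_sublist_iff]
  constructor
  · rintro ⟨n, hn, rfl, hT⟩
    rw [length_take] at hn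
    refine ⟨n + 1, by omega, by omega, by omega, T, ?_, ?_⟩
    · simp [getElem!_pos B n (by omega)]
    · simpa [take_take, min_eq_left (by omega : n ≤ m)] using hT
  · rintro ⟨k, hk1, hkm, hkB, T', hTT', hT'⟩
    obtain ⟨rfl, hx⟩ := append_inj' hTT' rfl
    rw [singleton_inj] at hx
    subst hx
    refine ⟨k - 1, by simp; omega, ?_, ?_⟩
    · simp [getElem!_pos B (k - 1) (by omega)]
    · simpa [take_take, min_eq_left (by omega : k - 1 ≤ m)] using hT'

theorem deltaAlmostIncreasing_append_singleton {δ x : ℝ} {S : List ℝ} :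
    DeltaAlmostIncreasing δ (S ++ [x]) ↔ DeltaAlmostIncreasing δ S ∧ ∀ y ∈ S, y < x + δ := by
  simp [DeltaAlmostIncreasing, pairwise_append]

def IsDAICSEndingAt (δ : ℝ) (X B : List ℝ) (k r : ℕ) (S₀ : List ℝ) : Prop :=
  (S₀ ++ [B[k-1]!]).length = r ∧ DeltaAlmostIncreasing δ (S₀ ++ [B[k-1]!]) ∧
    (S₀ ++ [B[k-1]!]) <+ X ∧ S₀ <+ B.take (k-1)

section Qp

variable {δ : ℝ} {A B S₀ : List ℝ} {i k r : ℕ}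

theorem Qp_le {w : EReal} (hS₀ : IsDAICSEndingAt δ (A.take i) B k r S₀)
    (hw : ∀ x ∈ S₀ ++ [B[k-1]!], (x : EReal) ≤ w) : Qp δ A B i k r ≤ w :=
  sInf_le ⟨S₀, hS₀.1, hS₀.2.1, hS₀.2.2.1, hS₀.2.2.2, hw⟩

theorem le_Qp {b : EReal}
    (h : ∀ S₀, IsDAICSEndingAt δ (A.take i) B k r S₀ →
      ∀ w : EReal, (∀ x ∈ S₀ ++ [B[k-1]!], (x : EReal) ≤ w) → b ≤ w) :
    b ≤ Qp δ A B i k r :=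
  le_sInf fun _ ⟨S₀, h₁, h₂, h₃, h₄, hw⟩ => h S₀ ⟨h₁, h₂, h₃, h₄⟩ _ hw

theorem exists_isDAICSEndingAt_of_Qp_lt {b : EReal} (h : Qp δ A B i k r < b) :
    ∃ S₀, IsDAICSEndingAt δ (A.take i) B k r S₀ ∧ ∀ x ∈ S₀ ++ [B[k-1]!], (x : EReal) < b := by
  obtain ⟨w, ⟨S₀, h₁, h₂, h₃, h₄, hw⟩, hwb⟩ := sInf_lt_iff.1 h
  exact ⟨S₀, ⟨h₁, h₂, h₃, h₄⟩, fun x hx => (hw x hx).trans_lt hwb⟩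

theorem Qp_lt {c : ℝ} (hS₀ : IsDAICSEndingAt δ (A.take i) B k r S₀)
    (hc : ∀ x ∈ S₀ ++ [B[k-1]!], x < c) : Qp δ A B i k r < c := by
  obtain ⟨m, hm, hmax⟩ := (S₀ ++ [B[k-1]!]).toFinset.exists_max_image id (by simp)
  calc Qp δ A B i k r ≤ m :=
        Qp_le hS₀ fun x hx => EReal.coe_le_coe_iff.2 (hmax x (mem_toFinset.2 hx))
    _ < c := EReal.coe_lt_coe_iff.2 (hc m (mem_toFinset.1 hm))

end Qp

section Matching

variable {δ : ℝ} {A B : List ℝ} {i j r : ℕ}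

theorem isDAICSEndingAt_take_iff (hi1 : 1 ≤ i) (hiA : i ≤ A.length) (hjB : j ≤ B.length)
    (heq : A[i-1]! = B[j-1]!) (hr : 2 ≤ r) {S₀ : List ℝ} :
    IsDAICSEndingAt δ (A.take i) B j r S₀ ↔ ∃ k, 1 ≤ k ∧ k < j ∧ ∃ T, S₀ = T ++ [B[k-1]!] ∧
      IsDAICSEndingAt δ (A.take (i-1)) B k (r-1) T ∧ ∀ x ∈ S₀, x < A[i-1]! + δ := by
  have htake : A.take i = A.take (i-1) ++ [A[i-1]!] := by
    rw [getElem!_pos A (i-1) (by omega), take_concat_get', Nat.sub_add_cancel hi1]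
  simp only [IsDAICSEndingAt, htake, ← heq, append_sublist_append_right,
    deltaAlmostIncreasing_append_singleton, length_append, length_singleton]
  constructor
  · rintro ⟨hlen, ⟨hdai, hlt⟩, hA, hB⟩
    have hne : S₀ ≠ [] := by rintro rfl; simp at hlen; omega
    obtain ⟨k, hk1, hkj, -, T, rfl, hT⟩ := (sublist_take_iff_of_ne_nil hne).1 hB
    exact ⟨k, hk1, by omega, T, rfl, ⟨by simp at hlen ⊢; omega,
      deltaAlmostIncreasing_append_singleton.1 hdai, hA, hT⟩, hlt⟩
  · rintro ⟨k, hk1, hkj, T, rfl, ⟨hlen, hdai, hA, hT⟩, hlt⟩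
    refine ⟨by simp at hlen ⊢; omega,
      ⟨deltaAlmostIncreasing_append_singleton.2 hdai, hlt⟩, hA, ?_⟩
    exact (sublist_take_iff_of_ne_nil (by simp)).2 ⟨k, hk1, by omega, by omega, T, rfl, hT⟩

theorem Qp_le_max_Qp_sub_one (hi1 : 1 ≤ i) (hiA : i ≤ A.length) (hjB : j ≤ B.length)
    (heq : A[i-1]! = B[j-1]!) (hr : 2 ≤ r) {k : ℕ} (hk1 : 1 ≤ k) (hkj : k < j)
    (hlt : Qp δ A B (i-1) k (r-1) < ((A[i-1]! + δ : ℝ) : EReal)) :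
    Qp δ A B i j r ≤ max ((A[i-1]! : ℝ) : EReal) (Qp δ A B (i-1) k (r-1)) := by
  refine le_of_forall_gt_imp_ge_of_dense fun b hb => ?_
  obtain ⟨T, hT, hTb⟩ := exists_isDAICSEndingAt_of_Qp_lt
    (lt_min ((le_max_right _ _).trans_lt hb) hlt)
  have hS₀ : IsDAICSEndingAt δ (A.take i) B j r (T ++ [B[k-1]!]) :=
    (isDAICSEndingAt_take_iff hi1 hiA hjB heq hr).2 ⟨k, hk1, hkj, T, rfl, hT,
      fun x hx => EReal.coe_lt_coe_iff.1 ((hTb x hx).trans_le (min_le_right _ _))⟩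
  refine Qp_le hS₀ fun x hx => ?_
  rcases mem_append.1 hx with hx | hx
  · exact ((hTb x hx).trans_le (min_le_left _ _)).le
  · rw [mem_singleton.1 hx, ← heq]
    exact ((le_max_left _ _).trans_lt hb).le

end Matching

theorem stmt_12_general (δ : ℝ) (A B : List ℝ) (i j r : ℕ)
    (hi1 : 1 ≤ i) (hiA : i ≤ A.length) (hjB : j ≤ B.length)
    (heq : A[i-1]! = B[j-1]!) (hr : 2 ≤ r) :
    Qp δ A B i j r =
    sInf {w : EReal | ∃ k, 1 ≤ k ∧ k < j ∧
      ExistsDAICSEndingAt δ (A.take (i-1)) B k (r-1) ∧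
      ((A[i-1]! : EReal) + (δ : EReal) > Qp δ A B (i-1) k (r-1)) ∧
      w = max ((A[i-1]! : ℝ) : EReal) (Qp δ A B (i-1) k (r-1))} := by
  refine le_antisymm (le_sInf ?_) (le_Qp fun S₀ hS₀ w hw => ?_)
  · rintro _ ⟨k, hk1, hkj, -, hlt, rfl⟩
    exact Qp_le_max_Qp_sub_one hi1 hiA hjB heq hr hk1 hkj (by rwa [EReal.coe_add])
  · obtain ⟨k, hk1, hkj, T, rfl, hT, hlt⟩ :=
      (isDAICSEndingAt_take_iff hi1 hiA hjB heq hr).1 hS₀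
    have hq : Qp δ A B (i-1) k (r-1) < ((A[i-1]! + δ : ℝ) : EReal) := Qp_lt hT hlt
    refine sInf_le_of_le ⟨k, hk1, hkj, ⟨T, hT⟩, by rwa [← EReal.coe_add], rfl⟩ (max_le ?_ ?_)
    · rw [heq]
      exact hw _ (mem_append_right _ (mem_singleton_self _))
    · exact Qp_le hT fun x hx => hw x (mem_append_left _ hx)

/-- Lemma 1, matching case, value recurrence: if A[i] = B[j] and r ≥ 2,
Q'(i,j,r) = min over 1 ≤ k < j with a length-(r−1) subsequence ending at k existing and
A[i] + δ > Q'(i−1,k,r−1), of max(A[i], Q'(i−1,k,r−1)). -/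
theorem stmt_12 (δ : ℝ) (hδ : 0 < δ) (A B : List ℝ) (i j r : ℕ)
    (hi1 : 1 ≤ i) (hiA : i ≤ A.length) (hj1 : 1 ≤ j) (hjB : j ≤ B.length)
    (heq : A[i-1]! = B[j-1]!) (hr : 2 ≤ r) :
    Qp δ A B i j r =
    sInf {w : EReal | ∃ k, 1 ≤ k ∧ k < j ∧
      ExistsDAICSEndingAt δ (A.take (i-1)) B k (r-1) ∧
      ((A[i-1]! : EReal) + (δ : EReal) > Qp δ A B (i-1) k (r-1)) ∧
      w = max ((A[i-1]! : ℝ) : EReal) (Qp δ A B (i-1) k (r-1))} :=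
  stmt_12_general δ A B i j r hi1 hiA hjB heq hr
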